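/- arXiv:2302.01695 — 6 statements merged into one kernel-verified Lean document; each statement's English description precedes it below -/
import Mathlib

section
/- For $r \ge 1$ and even $N \ge 2$, the function $f(x) = \sum_{j=0}^{2^r - 1} \cos^N\left(x + \frac{\pi j}{2^r}\right)$ attains its maximum over the reals at every point $x \in \frac{\pi}{2^r}\mathbb{Z}$. In particular, $f(x) \le f(0)$ for all real $x$. -/
/-!
Expanding `cos y ^ (2n) = 2^(-2n) ∑ₘ C(2n, m) e^{2i(m-n)y}` and summing over the shifts
`y + πj/M`, `j < M`, the frequencies `m - n` not divisible by `M` cancel (sums of `M`-th roots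
of unity), so the shifted sum is a cosine polynomial `∑ aₘ cos (2(m-n)y)` with `aₘ ≥ 0` and only
frequencies in `2Mℤ`. It is therefore at most `∑ aₘ`, which it attains on `(π/M)ℤ`.
-/

open Real Finset

namespace Complex

theorem sum_range_exp_two_pi_I_mul_div (M : ℕ) (hM : M ≠ 0) (d : ℤ) :
    ∑ j ∈ range M, exp (2 * π * I * d * j / M) = if (M : ℤ) ∣ d then (M : ℂ) else 0 := by
  set ω := exp (2 * π * I * d / M)
  have hpow (j : ℕ) : exp (2 * π * I * d * j / M) = ω ^ j := by
    rw [← exp_nat_mul]; ring_nf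
  have hω_iff : ω = 1 ↔ (M : ℤ) ∣ d := by
    rw [exp_eq_one_iff]
    constructor
    · rintro ⟨t, ht⟩
      refine ⟨t, ?_⟩
      have : (d : ℂ) = M * t := by
        field_simp at ht
        linear_combination ht
      exact_mod_cast this
    · rintro ⟨t, rfl⟩
      exact ⟨t, by push_cast; field_simp⟩
  simp_rw [hpow]
  split_ifs with hd
  · simp [hω_iff.mpr hd]
  · have hωM : ω ^ M = 1 := by
      rw [← exp_nat_mul, ← exp_int_mul_two_pi_mul_I d]; field_simp
    have := geom_sum_mul ω M
    rw [hωM, sub_self, mul_eq_zero, sub_eq_zero] at this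
    exact this.resolve_right (mt hω_iff.mp hd)

theorem cos_pow_eq_sum_exp (N : ℕ) (z : ℂ) :
    cos z ^ N = ∑ m ∈ range (N + 1), (N.choose m / 2 ^ N : ℂ) * exp ((2 * m - N : ℤ) * z * I) := by
  rw [cos, div_pow, add_pow, sum_div]
  refine sum_congr rfl fun m hm => ?_
  have hmN : m ≤ N := Nat.lt_succ_iff.mp (mem_range.mp hm)
  rw [← exp_nat_mul, ← exp_nat_mul, ← exp_add]
  push_cast [Nat.cast_sub hmN]
  ring_nf

theorem sum_cos_add_pi_mul_div_pow_eq (M n : ℕ) (hM : M ≠ 0) (z : ℂ) :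
    ∑ j ∈ range M, cos (z + π * j / M) ^ (2 * n) =
      ∑ m ∈ range (2 * n + 1) with (M : ℤ) ∣ ((m : ℕ) - n : ℤ),
        ((2 * n).choose m * M / 2 ^ (2 * n) : ℂ) * exp (2 * ((m : ℤ) - n : ℤ) * z * I) := by
  have hsplit (j m : ℕ) : exp ((2 * m - (2 * n : ℕ) : ℤ) * (z + π * j / M) * I) =
      exp (2 * (m - n : ℤ) * z * I) * exp (2 * π * I * (m - n : ℤ) * j / M) := by
    rw [← exp_add]; push_cast; ring_nf
  simp_rw [cos_pow_eq_sum_exp, hsplit]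
  rw [sum_comm, sum_filter]
  refine sum_congr rfl fun m _ => ?_
  rw [← mul_sum, ← mul_sum, sum_range_exp_two_pi_I_mul_div M hM]
  split_ifs <;> ring

end Complex

theorem Real.sum_cos_add_pi_mul_div_pow_eq (M n : ℕ) (hM : M ≠ 0) (y : ℝ) :
    ∑ j ∈ range M, cos (y + π * j / M) ^ (2 * n) =
      ∑ m ∈ range (2 * n + 1) with (M : ℤ) ∣ ((m : ℕ) - n : ℤ),
        ((2 * n).choose m * M / 2 ^ (2 * n) : ℝ) * cos (2 * ((m : ℤ) - n : ℤ) * y) := by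
  rw [← Complex.ofReal_re (∑ j ∈ range M, _)]
  push_cast
  rw [Complex.sum_cos_add_pi_mul_div_pow_eq M n hM, Complex.re_sum]
  refine sum_congr rfl fun m _ => ?_
  rw [← Complex.exp_ofReal_mul_I_re, ← Complex.re_ofReal_mul]
  push_cast
  rfl

theorem Real.sum_cos_add_pi_mul_div_pow_le (M n : ℕ) (hM : M ≠ 0) (x : ℝ) (k : ℤ) :
    ∑ j ∈ range M, cos (x + π * j / M) ^ (2 * n) ≤
      ∑ j ∈ range M, cos (π / M * k + π * j / M) ^ (2 * n) := by
  rw [Real.sum_cos_add_pi_mul_div_pow_eq M n hM, Real.sum_cos_add_pi_mul_div_pow_eq M n hM]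
  refine sum_le_sum fun m hm => ?_
  obtain ⟨t, ht⟩ := (mem_filter.mp hm).2
  have hcos : cos (2 * ((m : ℤ) - n : ℤ) * (π / M * k)) = 1 := by
    rw [ht, ← cos_int_mul_two_pi (t * k)]
    push_cast
    field_simp
  rw [hcos, mul_one]
  exact mul_le_of_le_one_right (by positivity) (cos_le_one _)

theorem stmt2_general (r N : ℕ) (hN : Even N) (x : ℝ) (k : ℤ) :
    ∑ j ∈ Finset.range (2 ^ r), Real.cos (x + π * j / 2 ^ r) ^ N ≤
      ∑ j ∈ Finset.range (2 ^ r), Real.cos (π / 2 ^ r * (k : ℝ) + π * j / 2 ^ r) ^ N := by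
  obtain ⟨n, rfl⟩ := hN
  rw [← two_mul]
  exact_mod_cast Real.sum_cos_add_pi_mul_div_pow_le (2 ^ r) n (by positivity) x k

theorem stmt2 (r N : ℕ) (hr : 1 ≤ r) (hN : Even N) (hN2 : 2 ≤ N) (x : ℝ) (k : ℤ) :
    ∑ j ∈ Finset.range (2 ^ r), Real.cos (x + π * j / 2 ^ r) ^ N ≤
      ∑ j ∈ Finset.range (2 ^ r), Real.cos (π / 2 ^ r * (k : ℝ) + π * j / 2 ^ r) ^ N :=
  stmt2_general r N hN x k
end

section
/- For every even $N \ge 2$, the function $f_N(\theta) = \frac{1}{2}\left(\cos^N\theta + \sin^N\theta + \sin^N(\theta + \pi/4) - \sin^N(\theta - \pi/4)\right)$ satisfies $\max_{\theta \in \mathbb{R}} f_N(\theta) = f_N(\pi/4) = \frac{1}{2} + \frac{1}{\sqrt{2}^N}$. -/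
open Real

noncomputable def f3 (N : ℕ) (θ : ℝ) : ℝ :=
  (1 / 2) * (Real.cos θ ^ N + Real.sin θ ^ N +
    Real.sin (θ + π / 4) ^ N - Real.sin (θ - π / 4) ^ N)

lemma aux_two_le (k : ℕ) {v : ℝ} (hv : v ^ 2 ≤ 1) :
    2 ≤ (1 + v) ^ k + (1 - v) ^ k := by
  have h1 : 0 ≤ 1 + v := by nlinarith [sq_nonneg (1 + v)]
  have h2 : 0 ≤ 1 - v := by nlinarith [sq_nonneg (1 - v)]
  induction k with
  | zero => norm_num
  | succ n ih =>
    have key : 0 ≤ v * ((1 + v) ^ n - (1 - v) ^ n) := by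
      rcases le_total 0 v with h | h
      · have := pow_le_pow_left₀ h2 (by linarith : 1 - v ≤ 1 + v) n
        exact mul_nonneg h (by linarith)
      · have hle := pow_le_pow_left₀ h1 (by linarith : 1 + v ≤ 1 - v) n
        have h' := mul_nonneg (neg_nonneg.mpr h) (sub_nonneg.mpr hle)
        nlinarith [h']
    have expand : (1 + v) ^ (n + 1) + (1 - v) ^ (n + 1)
        = ((1 + v) ^ n + (1 - v) ^ n) + v * ((1 + v) ^ n - (1 - v) ^ n) := by ring
    linarith

lemma aux_chord (m : ℕ) (hm : 1 ≤ m) {v : ℝ} (hv : v ^ 2 ≤ 1) :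
    (1 + v) ^ m + (1 - v) ^ m ≤ 2 + (2 ^ m - 2) * v ^ 2 := by
  induction m, hm using Nat.le_induction with
  | base => norm_num
  | succ n hn ih =>
    obtain ⟨k, rfl⟩ := Nat.exists_eq_add_of_le hn
    have h0 := aux_two_le k hv
    have hrec : (1 + v) ^ (1 + k + 1) + (1 - v) ^ (1 + k + 1)
        = 2 * ((1 + v) ^ (1 + k) + (1 - v) ^ (1 + k))
          - (1 - v ^ 2) * ((1 + v) ^ k + (1 - v) ^ k) := by ring
    have hpow : (2 : ℝ) ^ (1 + k + 1) = 2 * 2 ^ (1 + k) := by ring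
    have hprod : 2 * (1 - v ^ 2) ≤ (1 - v ^ 2) * ((1 + v) ^ k + (1 - v) ^ k) := by
      nlinarith
    rw [hrec, hpow]
    nlinarith [ih]

theorem stmt3 (N : ℕ) (hN : Even N) (h2 : 2 ≤ N) :
    (∀ θ : ℝ, f3 N θ ≤ f3 N (π / 4)) ∧ f3 N (π / 4) = 1 / 2 + 1 / Real.sqrt 2 ^ N := by
  obtain ⟨m, hmN⟩ := hN
  have hm1 : 1 ≤ m := by omega
  have hsqrt2 : Real.sqrt 2 ^ N = 2 ^ m := by
    rw [hmN, pow_add, ← mul_pow, Real.mul_self_sqrt (by norm_num)]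
  have hval : f3 N (π / 4) = 1 / 2 + 1 / Real.sqrt 2 ^ N := by
    unfold f3
    have e1 : π / 4 + π / 4 = π / 2 := by ring
    have e2 : π / 4 - π / 4 = 0 := by ring
    rw [e1, e2, Real.sin_pi_div_two, Real.sin_zero, Real.cos_pi_div_four,
      Real.sin_pi_div_four, hsqrt2]
    have hz : (0 : ℝ) ^ N = 0 := zero_pow (by omega)
    have hone : (1 : ℝ) ^ N = 1 := one_pow N
    have hq : (Real.sqrt 2 / 2) ^ N = 1 / 2 ^ m := by
      have h22 : Real.sqrt 2 * Real.sqrt 2 = 2 := Real.mul_self_sqrt (by norm_num)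
      rw [hmN, pow_add, ← mul_pow]
      rw [show Real.sqrt 2 / 2 * (Real.sqrt 2 / 2) = (Real.sqrt 2 * Real.sqrt 2) / 4 by ring,
        h22]
      rw [one_div, ← inv_pow]
      norm_num
    rw [hz, hone, hq]
    ring
  refine ⟨fun θ => ?_, hval⟩
  rw [hval, hsqrt2]
  set u := Real.cos (2 * θ) with hu
  set t := Real.sin (2 * θ) with ht
  have hut : t ^ 2 + u ^ 2 = 1 := Real.sin_sq_add_cos_sq (2 * θ)
  have hu2 : u ^ 2 ≤ 1 := by nlinarith [sq_nonneg t]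
  have ht2 : t ^ 2 ≤ 1 := by nlinarith [sq_nonneg u]
  have h1 : Real.cos θ ^ 2 = (1 + u) / 2 := by
    rw [Real.cos_sq, ← hu]; ring
  have h1s : Real.sin θ ^ 2 = (1 - u) / 2 := by
    rw [Real.sin_sq, h1]; ring
  have h3 : Real.sin (θ + π / 4) ^ 2 = (1 + t) / 2 := by
    rw [Real.sin_sq, Real.cos_sq, show 2 * (θ + π / 4) = 2 * θ + π / 2 by ring,
      Real.cos_add_pi_div_two, ← ht]; ring
  have h4 : Real.sin (θ - π / 4) ^ 2 = (1 - t) / 2 := by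
    rw [Real.sin_sq, Real.cos_sq, show 2 * (θ - π / 4) = 2 * θ - π / 2 by ring,
      Real.cos_sub_pi_div_two, ← ht]; ring
  have hcos : Real.cos θ ^ N = ((1 + u) / 2) ^ m := by
    rw [hmN, pow_add, ← mul_pow, ← sq, h1]
  have hsin : Real.sin θ ^ N = ((1 - u) / 2) ^ m := by
    rw [hmN, pow_add, ← mul_pow, ← sq, h1s]
  have hsp : Real.sin (θ + π / 4) ^ N = ((1 + t) / 2) ^ m := by
    rw [hmN, pow_add, ← mul_pow, ← sq, h3]
  have hsm : Real.sin (θ - π / 4) ^ N = ((1 - t) / 2) ^ m := by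
    rw [hmN, pow_add, ← mul_pow, ← sq, h4]
  unfold f3
  rw [hcos, hsin, hsp, hsm]
  have hD : (0 : ℝ) < 2 ^ m := by positivity
  have hA := aux_chord m hm1 hu2
  have hB := aux_chord m hm1 ht2
  have hC : (0 : ℝ) ≤ (1 - t) ^ m := by
    apply pow_nonneg
    nlinarith [sq_nonneg (1 - t)]
  have hsum : (1 + u) ^ m + (1 - u) ^ m + (1 + t) ^ m - (1 - t) ^ m ≤ 2 ^ m + 2 := by
    nlinarith [hA, hB, hC, hut]
  have hrw : (1 : ℝ) / 2 * (((1 + u) / 2) ^ m + ((1 - u) / 2) ^ m + ((1 + t) / 2) ^ m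
        - ((1 - t) / 2) ^ m)
      = ((1 + u) ^ m + (1 - u) ^ m + (1 + t) ^ m - (1 - t) ^ m) / (2 * 2 ^ m) := by
    rw [div_pow, div_pow, div_pow, div_pow]
    ring
  rw [hrw, div_le_iff₀ (by positivity)]
  have hexp : (1 / 2 + 1 / (2 : ℝ) ^ m) * (2 * 2 ^ m) = 2 ^ m + 2 := by
    field_simp
  rw [hexp]
  exact hsum
end

section
/- For even $N \ge 4$, the function $g(x) = \cos^N(x + \pi/8) + \cos^N(x + 3\pi/8)$ attains its global minimum over $\mathbb{R}$ at $x = \pi/4$ (modulo the period), with minimum value $2\cos^N(3\pi/8) = 2\sin^N(\pi/8)$. -/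
open Real

noncomputable def g5 (N : ℕ) (x : ℝ) : ℝ :=
  Real.cos (x + π / 8) ^ N + Real.cos (x + 3 * π / 8) ^ N

lemma aux_pow5 (m : ℕ) {u v : ℝ} (hu : 0 ≤ u) (hv : 0 ≤ v) :
    ((u + v) / 2) ^ m ≤ (u ^ m + v ^ m) / 2 := by
  have h := (convexOn_pow m).2 (Set.mem_Ici.2 hu) (Set.mem_Ici.2 hv)
    (by norm_num : (0:ℝ) ≤ 1/2) (by norm_num : (0:ℝ) ≤ 1/2) (by norm_num)
  simp only [smul_eq_mul] at h
  calc ((u + v) / 2) ^ m = (1/2 * u + 1/2 * v) ^ m := by ring_nf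
    _ ≤ 1/2 * u ^ m + 1/2 * v ^ m := h
    _ = (u ^ m + v ^ m) / 2 := by ring

theorem stmt5 (N : ℕ) (hN : Even N) (h4 : 4 ≤ N) :
    (∀ x : ℝ, g5 N (π / 4) ≤ g5 N x) ∧
      g5 N (π / 4) = 2 * Real.sin (π / 8) ^ N := by
  obtain ⟨m, hm⟩ := hN
  have hmN : N = 2 * m := by omega
  have hval : g5 N (π / 4) = 2 * Real.sin (π / 8) ^ N := by
    have h1 : π / 4 + π / 8 = π / 2 - π / 8 := by ring
    have h2 : π / 4 + 3 * π / 8 = π / 8 + π / 2 := by ring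
    rw [g5, h1, h2, Real.cos_pi_div_two_sub, Real.cos_add_pi_div_two,
      Even.neg_pow ⟨m, hm⟩]
    ring
  refine ⟨?_, hval⟩
  intro x
  rw [hval]
  set a := x + π / 8 with ha
  have hb : x + 3 * π / 8 = a + π / 4 := by rw [ha]; ring
  set u := Real.cos a ^ 2 with hu
  set v := Real.cos (a + π / 4) ^ 2 with hv
  have hu0 : 0 ≤ u := sq_nonneg _
  have hv0 : 0 ≤ v := sq_nonneg _
  have hs2 : Real.sqrt 2 ^ 2 = 2 := Real.sq_sqrt (by norm_num)
  have hs0 : 0 ≤ Real.sqrt 2 := Real.sqrt_nonneg 2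
  -- key: u + v ≥ 2 sin²(π/8) = 1 - √2/2
  have c1 : u = 1 / 2 + Real.cos (2 * a) / 2 := by rw [hu, Real.cos_sq]
  have c2 : v = 1 / 2 - Real.sin (2 * a) / 2 := by
    rw [hv, Real.cos_sq]
    have h2a : 2 * (a + π / 4) = 2 * a + π / 2 := by ring
    rw [h2a, Real.cos_add_pi_div_two]
    ring
  have c3 : Real.sin (π / 8) ^ 2 = 1 / 2 - Real.sqrt 2 / 4 := by
    have h8 : π / 8 + π / 8 = π / 4 := by ring
    have := Real.sin_sq_eq_half_sub (π / 8)
    rw [show 2 * (π / 8) = π / 4 by ring, Real.cos_pi_div_four] at this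
    rw [this]; ring
  have hkey : Real.cos (2 * a) - Real.sin (2 * a) ≥ -Real.sqrt 2 := by
    nlinarith [sq_nonneg (Real.cos (2 * a) - Real.sin (2 * a) + Real.sqrt 2),
      sq_nonneg (Real.cos (2 * a) + Real.sin (2 * a)),
      Real.sin_sq_add_cos_sq (2 * a), hs2, hs0,
      sq_nonneg (Real.sqrt 2 - 1)]
  have hsum : 2 * Real.sin (π / 8) ^ 2 ≤ u + v := by
    rw [c1, c2, c3]; linarith
  have e1 : g5 N x = u ^ m + v ^ m := by
    rw [g5, hb, hu, hv, ← pow_mul, ← pow_mul, ← hmN]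
  rw [e1]
  have hsq : 0 ≤ Real.sin (π / 8) ^ 2 := sq_nonneg _
  calc 2 * Real.sin (π / 8) ^ N = 2 * (Real.sin (π / 8) ^ 2) ^ m := by
        rw [← pow_mul, ← hmN]
    _ ≤ 2 * ((u + v) / 2) ^ m := by
        gcongr
        linarith
    _ ≤ u ^ m + v ^ m := by linarith [aux_pow5 m hu0 hv0]
end

section
/- Let $r \ge 2$ and let $\zeta = e^{-2\pi i j / 2^r}$ for an odd integer $j$ with $1 \le j \le 2^r - 1$, and let $f(q) = 1$ for $2^{r-1}+1 \le q \le 2^r - 1$ and $f(q)=0$ otherwise (for $0 \le q \le 2^r-1$). Then $\sum_{q=1,\ q \text{ odd}}^{2^r - 1} (-1)^{f(q)} \zeta^q = \frac{-2i}{\sin(2\pi j / 2^r)}$, and $\sum_{q=1,\ q \text{ odd}}^{2^r-1} (-1)^{f(q)} (i^{-1}\zeta)^q = \frac{-2i}{\cos(2\pi j/2^r)}$. -/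
open Real Finset

/-!
Put `M = 2 ^ (r - 1)` and let `w` be `ζ` or `i⁻¹ ζ`. Since `M` is even and the sign flips exactly
after `q = M`, the signed sum is `(1 - w ^ M) ∑_{q < M odd} w ^ q`, and the odd geometric sum
telescopes: `(1 - w ^ 2) ∑_{q < M odd} w ^ q = w (1 - w ^ M)`. When `w ^ M = -1` this gives
`(w⁻¹ - w) S = 4`, and `w⁻¹ - w` is `2 i sin θ` for `w = ζ` and `2 i cos θ` for `w = i⁻¹ ζ`.
For `r = 2` instead `(i⁻¹ ζ) ^ 2 = 1`, so the second sum is `0`; then `cos θ = 0` too, and the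
right-hand side is `0` because division by zero yields `0`.
-/

section SignedOddSum

variable {R : Type*} [CommRing R]

/-- `∑_{q < 2M, q odd} (-1)^{f(q)} w^q`, where `f(q) = 1` exactly when `q > M`. -/
def signedOddSum (M : ℕ) (w : R) : R :=
  ∑ q ∈ range (M + M), if q % 2 = 1 then (if M + 1 ≤ q then -1 else 1) * w ^ q else 0

theorem one_sub_sq_mul_sum_range_odd_pow (N : ℕ) (w : R) :
    (1 - w ^ 2) * ∑ q ∈ range (2 * N), (if q % 2 = 1 then w ^ q else 0) =
      w * (1 - w ^ (2 * N)) := by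
  induction N with
  | zero => simp
  | succ n ih =>
    rw [show 2 * (n + 1) = 2 * n + 1 + 1 by ring, sum_range_succ, sum_range_succ,
      if_neg (by omega), if_pos (by omega), add_zero, mul_add, ih]
    ring

theorem signedOddSum_eq_one_sub_pow_mul {M : ℕ} (hM : Even M) (w : R) :
    signedOddSum M w = (1 - w ^ M) * ∑ q ∈ range M, (if q % 2 = 1 then w ^ q else 0) := by
  have lower : ∀ q ∈ range M,
      (if q % 2 = 1 then (if M + 1 ≤ q then (-1 : R) else 1) * w ^ q else 0) =
        if q % 2 = 1 then w ^ q else 0 := by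
    intro q hq
    rw [mem_range] at hq
    rw [if_neg (show ¬M + 1 ≤ q by omega), one_mul]
  have upper : ∀ q ∈ range M,
      (if (M + q) % 2 = 1 then (if M + 1 ≤ M + q then (-1 : R) else 1) * w ^ (M + q) else 0) =
        -w ^ M * if q % 2 = 1 then w ^ q else 0 := by
    intro q _
    obtain ⟨N, rfl⟩ := hM
    by_cases hq : q % 2 = 1
    · rw [if_pos (by omega), if_pos (by omega), if_pos hq, pow_add]
      ring
    · rw [if_neg (by omega), if_neg hq, mul_zero]
  rw [signedOddSum, sum_range_add, sum_congr rfl lower, sum_congr rfl upper, ← mul_sum]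
  ring

theorem signedOddSum_eq_zero_of_pow_eq_one {M : ℕ} (hM : Even M) {w : R} (hw : w ^ M = 1) :
    signedOddSum M w = 0 := by
  rw [signedOddSum_eq_one_sub_pow_mul hM, hw, sub_self, zero_mul]

theorem one_sub_sq_mul_signedOddSum_of_pow_eq_neg_one {M : ℕ} (hM : Even M) {w : R}
    (hw : w ^ M = -1) : (1 - w ^ 2) * signedOddSum M w = 4 * w := by
  obtain ⟨N, hN⟩ := hM
  have hgeom := one_sub_sq_mul_sum_range_odd_pow N w
  rw [two_mul, ← hN, hw] at hgeom
  rw [signedOddSum_eq_one_sub_pow_mul ⟨N, hN⟩, hw, mul_left_comm, hgeom]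
  ring

end SignedOddSum

theorem inv_sub_mul_signedOddSum_of_pow_eq_neg_one {K : Type*} [Field K] {M : ℕ} (hM : Even M)
    {w : K} (hw0 : w ≠ 0) (hw : w ^ M = -1) : (w⁻¹ - w) * signedOddSum M w = 4 := by
  rw [show w⁻¹ - w = w⁻¹ * (1 - w ^ 2) by field_simp, mul_assoc,
    one_sub_sq_mul_signedOddSum_of_pow_eq_neg_one hM hw, mul_left_comm, inv_mul_cancel₀ hw0,
    mul_one]

namespace Complex

theorem inv_exp_neg_mul_I_sub (x : ℂ) : (exp (-x * I))⁻¹ - exp (-x * I) = 2 * I * sin x := by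
  have h := two_sin x
  rw [neg_mul] at h
  rw [← exp_neg, neg_mul, neg_neg]
  linear_combination (-I) * h + (exp (x * I) - exp (-(x * I))) * I_sq

theorem inv_exp_neg_mul_I_add (x : ℂ) : (exp (-x * I))⁻¹ + exp (-x * I) = 2 * cos x := by
  rw [← exp_neg, neg_mul, neg_neg, two_cos, neg_mul]

theorem eq_neg_two_mul_I_div_of_mul_eq_four {s S : ℂ} (h : 2 * I * s * S = 4) :
    S = -2 * I / s := by
  have hs : s ≠ 0 := by rintro rfl; norm_num at h
  rw [eq_div_iff hs]
  linear_combination (-I / 2) * h + s * S * I_sq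

theorem exp_neg_mul_I_pow_two_pow_pred {r j : ℕ} (hr : 1 ≤ r) (hj : Odd j) :
    exp (-(2 * π * j / 2 ^ r) * I) ^ 2 ^ (r - 1) = -1 := by
  have hr' : (2 : ℂ) ^ r = 2 * 2 ^ (r - 1) := by rw [← pow_succ']; congr 1; omega
  rw [← exp_nat_mul, show ((2 ^ (r - 1) : ℕ) : ℂ) * (-(2 * π * j / 2 ^ r) * I) = j * -(π * I) by
      rw [hr']; push_cast; field_simp,
    exp_nat_mul, exp_neg_pi_mul_I, hj.neg_one_pow]

theorem signedOddSum_exp_neg_mul_I {M : ℕ} (hM : Even M) {x : ℂ}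
    (hx : exp (-x * I) ^ M = -1) :
    signedOddSum M (exp (-x * I)) = -2 * I / sin x := by
  apply eq_neg_two_mul_I_div_of_mul_eq_four
  rw [← inv_exp_neg_mul_I_sub]
  exact inv_sub_mul_signedOddSum_of_pow_eq_neg_one hM (exp_ne_zero _) hx

theorem signedOddSum_inv_I_mul_exp_neg_mul_I {M : ℕ} (hM : 4 ∣ M) {x : ℂ}
    (hx : exp (-x * I) ^ M = -1) :
    signedOddSum M (I⁻¹ * exp (-x * I)) = -2 * I / cos x := by
  obtain ⟨k, rfl⟩ := hM
  have hw : (I⁻¹ * exp (-x * I)) ^ (4 * k) = -1 := by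
    rw [mul_pow, hx, pow_mul, inv_I, neg_pow, I_pow_four]
    norm_num
  have hinv : (I⁻¹ * exp (-x * I))⁻¹ - I⁻¹ * exp (-x * I) = 2 * I * cos x := by
    rw [mul_right_comm, ← inv_exp_neg_mul_I_add, inv_I, mul_inv, inv_neg, inv_I]
    ring
  apply eq_neg_two_mul_I_div_of_mul_eq_four
  rw [← hinv]
  exact inv_sub_mul_signedOddSum_of_pow_eq_neg_one ⟨2 * k, by ring⟩
    (mul_ne_zero (inv_ne_zero I_ne_zero) (exp_ne_zero _)) hw

theorem signedOddSum_two_inv_I_mul_exp_neg_mul_I {x : ℂ} (hx : exp (-x * I) ^ 2 = -1) :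
    signedOddSum 2 (I⁻¹ * exp (-x * I)) = -2 * I / cos x := by
  have hinv : (exp (-x * I))⁻¹ = -exp (-x * I) :=
    inv_eq_of_mul_eq_one_right (by linear_combination -hx)
  have hcos : cos x = 0 := by
    have h := inv_exp_neg_mul_I_add x
    rw [hinv, neg_add_cancel] at h
    linear_combination -h / 2
  rw [hcos, div_zero]
  refine signedOddSum_eq_zero_of_pow_eq_one even_two ?_
  rw [mul_pow, hx, inv_I, neg_sq, I_sq]
  norm_num

end Complex

theorem stmt8_general (r j : ℕ) (hr : 2 ≤ r) (hj : j % 2 = 1) :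
    (∑ q ∈ Finset.range (2 ^ r),
        (if q % 2 = 1 then
          (if 2 ^ (r - 1) + 1 ≤ q then (-1 : ℂ) else 1) *
            Complex.exp (-2 * (π : ℂ) * Complex.I * (j : ℂ) / 2 ^ r) ^ q
        else 0)) =
      -2 * Complex.I / (Real.sin (2 * π * j / 2 ^ r) : ℂ) ∧
    (∑ q ∈ Finset.range (2 ^ r),
        (if q % 2 = 1 then
          (if 2 ^ (r - 1) + 1 ≤ q then (-1 : ℂ) else 1) *
            (Complex.I⁻¹ * Complex.exp (-2 * (π : ℂ) * Complex.I * (j : ℂ) / 2 ^ r)) ^ q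
        else 0)) =
      -2 * Complex.I / (Real.cos (2 * π * j / 2 ^ r) : ℂ) := by
  have hM : 2 ^ r = 2 ^ (r - 1) + 2 ^ (r - 1) := by
    rw [← two_mul, ← pow_succ']; congr 1; omega
  have hx : -2 * (π : ℂ) * Complex.I * j / 2 ^ r = -(2 * π * j / 2 ^ r) * Complex.I := by ring
  rw [hM, hx, ← signedOddSum, ← signedOddSum, Complex.ofReal_sin, Complex.ofReal_cos]
  push_cast
  have hz := Complex.exp_neg_mul_I_pow_two_pow_pred (r := r) (by omega) (Nat.odd_iff.mpr hj)
  refine ⟨Complex.signedOddSum_exp_neg_mul_I ?_ hz, ?_⟩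
  · exact (Nat.even_pow' (by omega)).mpr even_two
  · rcases (show r = 2 ∨ 3 ≤ r by omega) with rfl | hr3
    · exact Complex.signedOddSum_two_inv_I_mul_exp_neg_mul_I hz
    · exact Complex.signedOddSum_inv_I_mul_exp_neg_mul_I
        (pow_dvd_pow 2 (show 2 ≤ r - 1 by omega)) hz

theorem stmt8 (r j : ℕ) (hr : 2 ≤ r) (hj : j % 2 = 1) (hj1 : 1 ≤ j) (hj2 : j ≤ 2 ^ r - 1) :
    (∑ q ∈ Finset.range (2 ^ r),
        (if q % 2 = 1 then
          (if 2 ^ (r - 1) + 1 ≤ q then (-1 : ℂ) else 1) *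
            Complex.exp (-2 * (π : ℂ) * Complex.I * (j : ℂ) / 2 ^ r) ^ q
        else 0)) =
      -2 * Complex.I / (Real.sin (2 * π * j / 2 ^ r) : ℂ) ∧
    (∑ q ∈ Finset.range (2 ^ r),
        (if q % 2 = 1 then
          (if 2 ^ (r - 1) + 1 ≤ q then (-1 : ℂ) else 1) *
            (Complex.I⁻¹ * Complex.exp (-2 * (π : ℂ) * Complex.I * (j : ℂ) / 2 ^ r)) ^ q
        else 0)) =
      -2 * Complex.I / (Real.cos (2 * π * j / 2 ^ r) : ℂ) :=
  stmt8_general r j hr hj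
end

section
/- Let $N \equiv 2 \pmod 4$. Then for all $0 \le w \le N$, $\binom{w}{3} \equiv \binom{N-w}{3} \pmod 2$; i.e., the three-uniform complete hypergraph state on $N \equiv 2 \pmod 4$ qubits satisfies the palindrome condition for being stabilized by $X^{\otimes N}$. -/
lemma choose3_step (w : ℕ) : Nat.choose (w + 4) 3 % 2 = Nat.choose w 3 % 2 := by
  simp [Nat.choose_succ_succ, Nat.choose_one_right, Nat.choose_zero_right,
    show w + 4 = (w + 3) + 1 from rfl, show w + 3 = (w + 2) + 1 from rfl,
    show w + 2 = (w + 1) + 1 from rfl]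
  omega

lemma choose3_parity : ∀ w : ℕ, Nat.choose w 3 % 2 = if w % 4 = 3 then 1 else 0 := by
  intro w
  induction w using Nat.strong_induction_on with
  | _ w ih =>
    match w with
    | 0 => decide
    | 1 => decide
    | 2 => decide
    | 3 => decide
    | (v + 4) =>
      rw [choose3_step, ih v (by omega)]
      have h : (v + 4) % 4 = v % 4 := by omega
      rw [h]

theorem stmt13 (N : ℕ) (hN : N % 4 = 2) (w : ℕ) (hw : w ≤ N) :
    Nat.choose w 3 % 2 = Nat.choose (N - w) 3 % 2 := by
  rw [choose3_parity, choose3_parity]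
  have : w % 4 = 3 ↔ (N - w) % 4 = 3 := by omega
  by_cases h : w % 4 = 3
  · rw [if_pos h, if_pos (this.mp h)]
  · rw [if_neg h, if_neg (fun hh => h (this.mpr hh))]
end

section
/- Let $N \equiv 0 \pmod 4$. Then for all $0 \le w \le N$, $\binom{w}{3} \equiv \binom{N-w}{3} + w + N/2 \pmod 2$; i.e., the three-uniform complete hypergraph state on $N \equiv 0 \pmod 4$ qubits satisfies the palindrome condition for being stabilized by $Y^{\otimes N}$. -/
lemma choose3_add4 (m : ℕ) : (m+4).choose 3 = m.choose 3 + 4*m.choose 2 + 6*m + 4 := by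
  simp [Nat.choose_succ_succ, Nat.choose_one_right]
  ring

lemma choose3_mod2 : ∀ n : ℕ, n.choose 3 % 2 = if n % 4 = 3 then 1 else 0 := by
  intro n
  induction n using Nat.strong_induction_on with
  | _ n ih =>
    match n, ih with
    | 0, _ => decide
    | 1, _ => decide
    | 2, _ => decide
    | 3, _ => decide
    | (m+4), ih =>
      rw [choose3_add4]
      have := ih m (by omega)
      split_ifs at this ⊢ <;> omega

theorem stmt14 (N : ℕ) (hN : N % 4 = 0) (w : ℕ) (hw : w ≤ N) :
    Nat.choose w 3 % 2 = (Nat.choose (N - w) 3 + w + N / 2) % 2 := by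
  have h1 := choose3_mod2 w
  have h2 := choose3_mod2 (N - w)
  split_ifs at h1 h2 <;> omega
end
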